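/- (Deterministic form of Lemma 2.10, null case.) Fix f ≥ 0, k > 0, r ≥ 1, β > 0, δ > 0, c₀ > 0, and set m_n = δn − c₀ and τ_n² = βn. Then lim_{n→∞} n^{k/2+r} · BF₁₀(f | τ_n², r; k, m_n) = β^{−(k/2+r)} · ₁F₁(k/2+r, k/2; kf/2), where BF₁₀(f|τ²,r;k,m) denotes the F Bayes factor with (k,m) degrees of freedom. In particular BF₁₀(f|τ_n²,r;k,m_n) = O(n^{−(k/2+r)}). -/

import Mathlib

open Real MeasureTheory Filter Asymptotics

/-- Rising factorial (Pochhammer symbol) `(a)_k`. -/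
noncomputable def risingFac (a : ℝ) (k : ℕ) : ℝ := (ascPochhammer ℝ k).eval a

/-- Confluent hypergeometric function `₁F₁(a, b; x)`. -/
noncomputable def oneF1 (a b x : ℝ) : ℝ :=
  ∑' k : ℕ, (risingFac a k / risingFac b k) * x ^ k / (Nat.factorial k : ℝ)

/-- Gaussian hypergeometric function `₂F₁(a, b, c; x)` (as a series). -/
noncomputable def twoF1 (a b c x : ℝ) : ℝ :=
  ∑' k : ℕ, (risingFac a k * risingFac b k / (risingFac c k * (Nat.factorial k : ℝ))) * x ^ k

/-- `F` Bayes factor `BF₁₀(f | τ², r; k, m)` with `(k, m)` degrees of freedom,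
as a function of `τ² = τsq`. -/
noncomputable def BF10F (f τsq r k m : ℝ) : ℝ :=
  (1 + τsq) ^ (-(k / 2 + r)) *
    twoF1 (k / 2 + r) ((k + m) / 2) (k / 2) (k * f * τsq / ((1 + τsq) * (m + k * f)))

/-! Write `A = k/2 + r`. Then `(1 + τ²)^A · BF₁₀` is the `₂F₁` series with argument
`x = kfτ² / ((1 + τ²)(m + kf))` and second parameter `b = (k + m)/2`; as `τ², m → ∞` we have
`x → 0` and `b x → kf/2`. Each term `(b)ⱼ xʲ` tends to `(kf/2)ʲ`, and once `|x| ≤ 1/2` and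
`b |x| ≤ M` it is bounded by `(1/2)ʲ (2M)ⱼ`, so the series is dominated by a convergent `₂F₁`
series at `1/2` and Tannery's theorem gives the limit `₁F₁(A, k/2; kf/2)`. For `τ² = βn` the
remaining factor `n^A (1 + βn)^(-A)` tends to `β^(-A)`, and the `O`-bound follows from the limit.
-/

lemma risingFac_zero (a : ℝ) : risingFac a 0 = 1 := by simp [risingFac]

lemma risingFac_succ (a : ℝ) (j : ℕ) : risingFac a (j + 1) = risingFac a j * (a + j) := by
  simp [risingFac, ascPochhammer_succ_eval]

lemma risingFac_nonneg {a : ℝ} (ha : 0 ≤ a) (j : ℕ) : 0 ≤ risingFac a j := by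
  induction j with
  | zero => simp [risingFac_zero]
  | succ j ih => rw [risingFac_succ]; positivity

lemma risingFac_pos {a : ℝ} (ha : 0 < a) (j : ℕ) : 0 < risingFac a j :=
  ascPochhammer_pos j a ha

lemma abs_risingFac_le {a a' : ℝ} (h : |a| ≤ a') (j : ℕ) : |risingFac a j| ≤ risingFac a' j := by
  induction j with
  | zero => simp [risingFac_zero]
  | succ j ih =>
    rw [risingFac_succ, risingFac_succ, abs_mul]
    have : |a + j| ≤ a' + j := (abs_add_le _ _).trans (by simpa using h)
    exact mul_le_mul ih this (abs_nonneg _) (risingFac_nonneg ((abs_nonneg a).trans h) j)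

lemma abs_risingFac_mul_pow_le {b x M : ℝ} (hb : 0 ≤ b) (hx : |x| ≤ 1 / 2) (hbx : b * |x| ≤ M)
    (j : ℕ) : |risingFac b j * x ^ j| ≤ (1 / 2) ^ j * risingFac (2 * M) j := by
  have hM : 0 ≤ 2 * M := by nlinarith [abs_nonneg x]
  induction j with
  | zero => simp [risingFac_zero]
  | succ j ih =>
    have hstep : (b + j) * |x| ≤ (2 * M + j) / 2 := by
      nlinarith [mul_le_mul_of_nonneg_left hx (Nat.cast_nonneg (α := ℝ) j)]
    have := risingFac_nonneg hM j
    calc |risingFac b (j + 1) * x ^ (j + 1)| = |risingFac b j * x ^ j| * ((b + j) * |x|) := by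
          rw [risingFac_succ, pow_succ, abs_mul, abs_mul, abs_mul, abs_mul,
            abs_of_nonneg (by positivity : 0 ≤ b + j)]
          ring
      _ ≤ ((1 / 2) ^ j * risingFac (2 * M) j) * ((2 * M + j) / 2) :=
          mul_le_mul ih hstep (by positivity) (by positivity)
      _ = (1 / 2) ^ (j + 1) * risingFac (2 * M) (j + 1) := by rw [risingFac_succ, pow_succ]; ring

lemma tendsto_risingFac_mul_pow {ι : Type*} {l : Filter ι} {b x : ι → ℝ} {L : ℝ}
    (hx : Tendsto x l (nhds 0)) (hbx : Tendsto (fun n => b n * x n) l (nhds L)) (j : ℕ) :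
    Tendsto (fun n => risingFac (b n) j * x n ^ j) l (nhds (L ^ j)) := by
  induction j with
  | zero => simpa [risingFac_zero] using tendsto_const_nhds
  | succ j ih =>
    have hstep : Tendsto (fun n => b n * x n + j * x n) l (nhds L) := by
      simpa using hbx.add (hx.const_mul (j : ℝ))
    refine (ih.mul hstep).congr fun n => ?_
    rw [risingFac_succ, pow_succ]
    ring

lemma summable_twoF1_terms {a b c x : ℝ} (ha : 0 < a) (hb : 0 < b) (hc : 0 < c) (hx : |x| < 1) :
    Summable fun j : ℕ =>
      risingFac a j * risingFac b j / (risingFac c j * (Nat.factorial j : ℝ)) * x ^ j := by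
  have hradius := ordinaryHypergeometricSeries_radius_eq_one (𝔸 := ℝ) a b c fun n =>
    ⟨by linarith [n.cast_nonneg (α := ℝ)], by linarith [n.cast_nonneg (α := ℝ)],
      by linarith [n.cast_nonneg (α := ℝ)]⟩
  have hsum := (ordinaryHypergeometricSeries ℝ a b c).summable_norm_apply (x := x)
    (by rw [mem_eball_zero_iff, hradius, ← ofReal_norm, Real.norm_eq_abs]
        exact ENNReal.ofReal_lt_one.mpr hx)
  refine hsum.of_norm.congr fun j => ?_
  rw [ordinaryHypergeometricSeries_apply_eq, smul_eq_mul, risingFac, risingFac, risingFac]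
  field_simp

theorem tendsto_twoF1_oneF1 {ι : Type*} {l : Filter ι} {a c L : ℝ} (hc : 0 < c)
    {b x : ι → ℝ} (hb : ∀ᶠ n in l, 0 ≤ b n) (hx : Tendsto x l (nhds 0))
    (hbx : Tendsto (fun n => b n * x n) l (nhds L)) :
    Tendsto (fun n => twoF1 a (b n) c (x n)) l (nhds (oneF1 a c L)) := by
  set M := |L| + 1
  have hsmall : ∀ᶠ n in l, |x n| ≤ 1 / 2 := by
    simpa using (hx.abs).eventually (eventually_le_nhds (by norm_num : |(0 : ℝ)| < 1 / 2))
  have hbounded : ∀ᶠ n in l, b n * |x n| ≤ M := by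
    have : Tendsto (fun n => |b n * x n|) l (nhds |L|) := hbx.abs
    filter_upwards [this.eventually (eventually_le_nhds (lt_add_one |L|)), hb] with n hn hbn
    rwa [abs_mul, abs_of_nonneg hbn] at hn
  have hlim : oneF1 a c L = ∑' j : ℕ,
      risingFac a j / (risingFac c j * (Nat.factorial j : ℝ)) * L ^ j :=
    tsum_congr fun j => by ring
  rw [hlim]
  refine tendsto_tsum_of_dominated_convergence
    (summable_twoF1_terms (a := |a| + 1) (b := 2 * M) (by positivity) (by positivity) hc
      (by norm_num : |(1 / 2 : ℝ)| < 1)) (fun j => ?_) ?_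
  · refine ((tendsto_risingFac_mul_pow hx hbx j).const_mul
      (risingFac a j / (risingFac c j * (Nat.factorial j : ℝ)))).congr fun n => ?_
    ring
  · filter_upwards [hb, hsmall, hbounded] with n hbn hxn hbxn j
    have hcj := risingFac_pos hc j
    calc ‖risingFac a j * risingFac (b n) j / (risingFac c j * (Nat.factorial j : ℝ)) * x n ^ j‖
        = |risingFac a j| / (risingFac c j * (Nat.factorial j : ℝ))
            * |risingFac (b n) j * x n ^ j| := by
          simp only [Real.norm_eq_abs, abs_mul, abs_div, abs_of_pos hcj, Nat.abs_cast]; ring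
      _ ≤ risingFac (|a| + 1) j / (risingFac c j * (Nat.factorial j : ℝ))
            * ((1 / 2) ^ j * risingFac (2 * M) j) := by
          have := risingFac_nonneg (a := |a| + 1) (by positivity) j
          gcongr
          exacts [abs_risingFac_le (le_add_of_nonneg_right zero_le_one) j,
            abs_risingFac_mul_pow_le hbn hxn hbxn j]
      _ = _ := by ring

lemma tendsto_add_div_add_of_tendsto_atTop {ι : Type*} {l : Filter ι} {m : ι → ℝ}
    (hm : Tendsto m l atTop) (a b : ℝ) :
    Tendsto (fun n => (a + m n) / (b + m n)) l (nhds 1) := by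
  have hden := tendsto_atTop_add_const_left l b hm
  have := (tendsto_const_nhds (x := a - b)).div_atTop hden |>.const_add 1
  rw [add_zero] at this
  refine this.congr' ?_
  filter_upwards [hden.eventually_gt_atTop 0] with n hn
  field_simp
  ring

theorem tendsto_one_add_rpow_mul_BF10F {ι : Type*} {l : Filter ι} {τ m : ι → ℝ} (f r : ℝ)
    {k : ℝ} (hk : 0 < k) (hτ : Tendsto τ l atTop) (hm : Tendsto m l atTop) :
    Tendsto (fun n => (1 + τ n) ^ (k / 2 + r) * BF10F f (τ n) r k (m n)) l
      (nhds (oneF1 (k / 2 + r) (k / 2) (k * f / 2))) := by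
  have hτ' : Tendsto (fun n => τ n / (1 + τ n)) l (nhds 1) := by
    simpa using tendsto_add_div_add_of_tendsto_atTop hτ 0 1
  have hx : Tendsto (fun n => k * f * τ n / ((1 + τ n) * (m n + k * f))) l (nhds 0) := by
    have := (hτ'.const_mul (k * f)).mul
      (tendsto_atTop_add_const_right l (k * f) hm).inv_tendsto_atTop
    simp only [mul_one, mul_zero] at this
    exact this.congr fun n => by simp only [Pi.inv_apply, div_eq_mul_inv, mul_inv]; ring
  have hbx : Tendsto (fun n => (k + m n) / 2 * (k * f * τ n / ((1 + τ n) * (m n + k * f)))) l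
      (nhds (k * f / 2)) := by
    have := (hτ'.const_mul (k * f / 2)).mul (tendsto_add_div_add_of_tendsto_atTop hm k (k * f))
    simp only [mul_one] at this
    exact this.congr fun n => by simp only [div_eq_mul_inv, mul_inv]; ring
  have hb : ∀ᶠ n in l, 0 ≤ (k + m n) / 2 := by
    filter_upwards [hm.eventually_ge_atTop 0] with n hn
    positivity
  refine (tendsto_twoF1_oneF1 (half_pos hk) hb hx hbx).congr' ?_
  filter_upwards [hτ.eventually_ge_atTop 0] with n hn
  rw [BF10F, ← mul_assoc, ← Real.rpow_add (by positivity), add_neg_cancel, Real.rpow_zero,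
    one_mul]

lemma tendsto_natCast_rpow_mul_one_add_mul_rpow_neg {β : ℝ} (hβ : 0 < β) (A : ℝ) :
    Tendsto (fun n : ℕ => (n : ℝ) ^ A * (1 + β * n) ^ (-A)) atTop (nhds (β ^ (-A))) := by
  have h := (tendsto_add_mul_div_add_mul_atTop_nhds (0 : ℝ) 1 1 hβ.ne').rpow_const
    (p := A) (Or.inl (by positivity))
  rw [one_div, Real.inv_rpow hβ.le, ← Real.rpow_neg hβ.le] at h
  refine h.congr fun n => ?_
  rw [zero_add, one_mul, Real.div_rpow (by positivity) (by positivity),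
    Real.rpow_neg (by positivity), div_eq_mul_inv]

theorem lemma210_null_general (f k r β δ c₀ : ℝ) (hk : 0 < k)
    (hβ : 0 < β) (hδ : 0 < δ) :
    Tendsto (fun n : ℕ => (n : ℝ) ^ (k / 2 + r) * BF10F f (β * n) r k (δ * n - c₀)) atTop
      (nhds (β ^ (-(k / 2 + r)) * oneF1 (k / 2 + r) (k / 2) (k * f / 2))) ∧
    (fun n : ℕ => BF10F f (β * n) r k (δ * n - c₀)) =O[atTop]
      fun n : ℕ => (n : ℝ) ^ (-(k / 2 + r)) := by
  have hτ : Tendsto (fun n : ℕ => β * n) atTop atTop :=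
    tendsto_natCast_atTop_atTop.const_mul_atTop hβ
  have hm : Tendsto (fun n : ℕ => δ * n - c₀) atTop atTop :=
    tendsto_atTop_add_const_right _ _ (tendsto_natCast_atTop_atTop.const_mul_atTop hδ)
  have hlim : Tendsto (fun n : ℕ => (n : ℝ) ^ (k / 2 + r) * BF10F f (β * n) r k (δ * n - c₀))
      atTop (nhds (β ^ (-(k / 2 + r)) * oneF1 (k / 2 + r) (k / 2) (k * f / 2))) := by
    refine ((tendsto_natCast_rpow_mul_one_add_mul_rpow_neg hβ (k / 2 + r)).mul
      (tendsto_one_add_rpow_mul_BF10F f r hk hτ hm)).congr fun n => ?_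
    rw [mul_assoc, ← mul_assoc (_ ^ (-_)), ← Real.rpow_add (by positivity), neg_add_cancel,
      Real.rpow_zero, one_mul]
  refine ⟨hlim, isBigO_of_div_tendsto_nhds ?_ _ (hlim.congr' ?_)⟩
  all_goals filter_upwards [eventually_gt_atTop 0] with n hn
  · exact fun h => absurd h (Real.rpow_pos_of_pos (Nat.cast_pos.mpr hn) _).ne'
  · rw [Pi.div_apply, Real.rpow_neg (Nat.cast_nonneg n), div_inv_eq_mul, mul_comm]

/-- Deterministic form of Lemma 2.10, null case. -/
theorem lemma210_null (f k r β δ c₀ : ℝ) (hf : 0 ≤ f) (hk : 0 < k) (hr : 1 ≤ r)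
    (hβ : 0 < β) (hδ : 0 < δ) (hc₀ : 0 < c₀) :
    Tendsto (fun n : ℕ => (n : ℝ) ^ (k / 2 + r) * BF10F f (β * n) r k (δ * n - c₀)) atTop
      (nhds (β ^ (-(k / 2 + r)) * oneF1 (k / 2 + r) (k / 2) (k * f / 2))) ∧
    (fun n : ℕ => BF10F f (β * n) r k (δ * n - c₀)) =O[atTop]
      fun n : ℕ => (n : ℝ) ^ (-(k / 2 + r)) :=
  lemma210_null_general f k r β δ c₀ hk hβ hδ
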